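/- arXiv:2406.14074 — 4 statements merged into one kernel-verified Lean document; each statement's English description precedes it below -/
import Mathlib

section
/- Assume Condition (C) and let ε > 0. Then there exist a symmetric positive definite N×N real matrix Γ and a constant κ > 0 such that for every u ∈ ℝ^N with nonnegative entries and every X ∈ ℝ^N, ⟨X, Γ A^ε(u) X⟩ ≥ κ‖X‖₂². -/
open Finset Matrix

/-!
Take `Γ = diag(1/f) + ρ 𝟙𝟙ᵀ`. With `D = ε + Σ f u`, `B = B^ε(u)` and `w = u / D`, the matrix is
`A_{nk} = δ_{nk} B_n + w_n (f_n - B_n f_k)`; its columns sum to one, so the rank-one part of `Γ`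
contributes exactly `ρ (Σ X)²`. The diagonal part contributes `Σ (B_n / f_n) X_n² ≥ ‖X‖² / f_max`
and two cross terms. Splitting `Σ f X = f̄ Σ X + Σ (f - f̄) X`, one of them is a multiple of `Σ X`,
of size at most `(f_max - f_min) / f_min² · ‖X‖`, and is absorbed into `ρ (Σ X)²` once `ρ` is
large; by Cauchy–Schwarz the other is at most `√(Σ (f - f̄)²) / f_min² · ‖X‖²`. Condition (C) gives
`β(f) < 1`, which makes `1 / f_max - √(Σ (f - f̄)²) / f_min²` positive.
-/

/-- `B^ε_n(u) = (ε + f(n) Σ_k u_k) / (ε + Σ_k f(k) u_k)`. -/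
noncomputable def Bv (N : ℕ) (f : Fin N → ℝ) (ε : ℝ) (u : Fin N → ℝ) (n : Fin N) : ℝ :=
  (ε + f n * ∑ k, u k) / (ε + ∑ k, f k * u k)

/-- The matrix `A^ε(u)`. -/
noncomputable def Amat (N : ℕ) (f : Fin N → ℝ) (ε : ℝ) (u : Fin N → ℝ) :
    Matrix (Fin N) (Fin N) ℝ :=
  Matrix.of fun n k =>
    if n = k then
      Bv N f ε u n + u n * (f n * ∑ l, (f l - f n) * u l) / (ε + ∑ l, f l * u l) ^ 2
    else
      u n * (ε * (f n - f k) + f n * ∑ l, (f l - f k) * u l) / (ε + ∑ l, f l * u l) ^ 2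

/-- `f_max`. -/
noncomputable def fmax (N : ℕ) (f : Fin N → ℝ) : ℝ := ⨆ n, f n

/-- `f_min`. -/
noncomputable def fmin (N : ℕ) (f : Fin N → ℝ) : ℝ := ⨅ n, f n

/-- `f̄ = (1/N) Σ_n f(n)`. -/
noncomputable def fbar (N : ℕ) (f : Fin N → ℝ) : ℝ := (∑ n, f n) / N

/-- `β(f) = (f_max − f_min)/f_min + (1/f_min)√(Σ_n (f(n) − f̄)²)`. -/
noncomputable def betaf (N : ℕ) (f : Fin N → ℝ) : ℝ :=
  (fmax N f - fmin N f) / fmin N f +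
    (1 / fmin N f) * Real.sqrt (∑ n, (f n - fbar N f) ^ 2)

/-- `κ₀ = (1/2)[N + 1 − max_k √((Σ_{n≠k} f(n))(Σ_{n≠k} 1/f(n)))]`. -/
noncomputable def kappa0 (N : ℕ) (f : Fin N → ℝ) : ℝ :=
  (1 / 2) * (N + 1 -
    ⨆ k : Fin N, Real.sqrt ((∑ n ∈ univ.erase k, f n) * ∑ n ∈ univ.erase k, (f n)⁻¹))

theorem neg_le_mul_add_mul_sq {ρ H B : ℝ} (hρ : 0 < ρ) (h : H ^ 2 ≤ 4 * ρ * B) (s : ℝ) :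
    -B ≤ s * H + ρ * s ^ 2 := by
  nlinarith [sq_nonneg (2 * ρ * s + H)]

theorem abs_one_sub_mul_le {m M c b : ℝ} (hm : 0 < m) (hcm : m ≤ c) (hcM : c ≤ M)
    (hb : b ∈ Set.Icc (1 / M) (1 / m)) : |1 - c * b| ≤ (M - m) / m := by
  have hM : 0 < M := hm.trans_le (hcm.trans hcM)
  have hlo : m / M ≤ c * b := by
    rw [div_eq_mul_one_div]; exact mul_le_mul hcm hb.1 (by positivity) (by linarith)
  have hhi : c * b ≤ M / m := by
    rw [div_eq_mul_one_div]; exact mul_le_mul hcM hb.2 (hb.1.trans' (by positivity)) hM.le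
  have hMm : M / m = 1 + (M - m) / m := by field_simp; ring
  have hmM : 1 - (M - m) / m ≤ m / M := by
    rw [one_sub_div hm.ne', div_le_div_iff₀ hm hM]
    nlinarith [sq_nonneg (M - m)]
  rw [abs_le]
  constructor <;> linarith

section General

variable {ι : Type*} [Fintype ι]

theorem abs_sum_mul_le_sqrt_mul_sqrt (x y : ι → ℝ) :
    |∑ i, x i * y i| ≤ √(∑ i, x i ^ 2) * √(∑ i, y i ^ 2) := by
  rw [← Real.sqrt_mul (sum_nonneg fun i _ => sq_nonneg (x i))]
  exact Real.abs_le_sqrt (sum_mul_sq_le_sq_mul_sq _ x y)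

theorem abs_sum_mul_mul_le {w c : ι → ℝ} {C : ℝ} (hw : ∀ i, 0 ≤ w i) (hc : ∀ i, |c i| ≤ C)
    (x : ι → ℝ) : |∑ i, w i * x i * c i| ≤ C * (∑ i, w i) * √(∑ i, x i ^ 2) := by
  have hx : ∀ i, |x i| ≤ √(∑ i, x i ^ 2) := fun i =>
    Real.abs_le_sqrt (single_le_sum (fun j _ => sq_nonneg (x j)) (mem_univ i))
  calc |∑ i, w i * x i * c i| ≤ ∑ i, |w i * x i * c i| := abs_sum_le_sum_abs _ _
    _ ≤ ∑ i, w i * √(∑ i, x i ^ 2) * C := by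
      refine sum_le_sum fun i _ => ?_
      rw [abs_mul, abs_mul, abs_of_nonneg (hw i)]
      exact mul_le_mul (mul_le_mul_of_nonneg_left (hx i) (hw i)) (hc i) (abs_nonneg _)
        (mul_nonneg (hw i) (Real.sqrt_nonneg _))
    _ = C * (∑ i, w i) * √(∑ i, x i ^ 2) := by rw [← sum_mul, ← sum_mul]; ring

theorem mul_sum_le_sum_mul {a : ℝ} {f u : ι → ℝ} (hu : ∀ i, 0 ≤ u i) (h : ∀ i, a ≤ f i) :
    a * ∑ i, u i ≤ ∑ i, f i * u i := by
  rw [mul_sum]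
  exact sum_le_sum fun i _ => mul_le_mul_of_nonneg_right (h i) (hu i)

theorem sum_mul_le_mul_sum {a : ℝ} {f u : ι → ℝ} (hu : ∀ i, 0 ≤ u i) (h : ∀ i, f i ≤ a) :
    ∑ i, f i * u i ≤ a * ∑ i, u i := by
  rw [mul_sum]
  exact sum_le_sum fun i _ => mul_le_mul_of_nonneg_right (h i) (hu i)

variable [DecidableEq ι]

theorem diagonal_add_smul_vecMulVec_one_mulVec_apply (d : ι → ℝ) (ρ : ℝ) (y : ι → ℝ) (i : ι) :
    ((diagonal d + ρ • vecMulVec 1 1) *ᵥ y) i = d i * y i + ρ * ∑ j, y j := by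
  rw [add_mulVec, smul_mulVec, vecMulVec_mulVec, Pi.add_apply, mulVec_diagonal]
  simp [dotProduct]

theorem dotProduct_diagonal_add_smul_vecMulVec_one_mulVec (d : ι → ℝ) (ρ : ℝ) (x y : ι → ℝ) :
    x ⬝ᵥ ((diagonal d + ρ • vecMulVec 1 1) *ᵥ y) =
      ∑ i, d i * x i * y i + ρ * (∑ i, x i) * ∑ i, y i := by
  simp only [dotProduct, diagonal_add_smul_vecMulVec_one_mulVec_apply, mul_add, sum_add_distrib,
    ← sum_mul]
  congr 1
  · exact sum_congr rfl fun i _ => by ring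
  · ring

theorem posDef_diagonal_add_smul_vecMulVec_one {d : ι → ℝ} (hd : ∀ i, 0 < d i) {ρ : ℝ}
    (hρ : 0 ≤ ρ) : (diagonal d + ρ • vecMulVec 1 1).PosDef := by
  have h := (posSemidef_vecMulVec_self_star (1 : ι → ℝ)).smul hρ
  rw [star_one] at h
  exact (posDef_diagonal_iff.2 hd).add_posSemidef h

end General

section Amat

variable {N : ℕ} {f : Fin N → ℝ} {ε : ℝ} {u : Fin N → ℝ}

theorem Amat_apply_eq (hD : ε + ∑ l, f l * u l ≠ 0) (n k : Fin N) :
    Amat N f ε u n k = (if n = k then Bv N f ε u n else 0) +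
      u n / (ε + ∑ l, f l * u l) * (f n - Bv N f ε u n * f k) := by
  have hsum : ∀ j, ∑ l, (f l - f j) * u l = ∑ l, f l * u l - f j * ∑ l, u l := fun j => by
    simp only [sub_mul, sum_sub_distrib, mul_sum]
  simp only [Amat, Bv, of_apply]
  split_ifs with h
  · subst h
    rw [hsum]
    field_simp
    ring
  · rw [hsum]
    field_simp
    ring

theorem Amat_mulVec_apply (hD : ε + ∑ l, f l * u l ≠ 0) (X : Fin N → ℝ) (n : Fin N) :
    (Amat N f ε u *ᵥ X) n = Bv N f ε u n * X n +
      u n / (ε + ∑ l, f l * u l) * (f n * ∑ k, X k - Bv N f ε u n * ∑ k, f k * X k) := by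
  simp only [mulVec, dotProduct, Amat_apply_eq hD, add_mul, ite_mul, zero_mul, sum_add_distrib,
    sum_ite_eq, mem_univ, if_true]
  simp only [mul_sub, mul_sum, ← sum_sub_distrib]
  exact congrArg _ (sum_congr rfl fun k _ => by ring)

theorem sum_Amat_mulVec (hD : ε + ∑ l, f l * u l ≠ 0) (X : Fin N → ℝ) :
    ∑ n, (Amat N f ε u *ᵥ X) n = ∑ n, X n := by
  simp only [Amat_mulVec_apply hD, Bv]
  set D := ε + ∑ l, f l * u l
  set S := ∑ l, u l
  set F := ∑ k, f k * X k
  have hpt : ∀ n, (ε + f n * S) / D * X n + u n / D * (f n * ∑ k, X k - (ε + f n * S) / D * F) =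
      ε / D * X n + S / D * (f n * X n) + (∑ k, X k) / D * (f n * u n) - ε * F / D ^ 2 * u n -
        S * F / D ^ 2 * (f n * u n) := fun n => by
    field_simp
    ring
  simp only [hpt, sum_add_distrib, sum_sub_distrib, ← mul_sum]
  field_simp
  ring

theorem dotProduct_diagonal_add_mul_Amat_mulVec (hf : ∀ n, f n ≠ 0) (hD : ε + ∑ l, f l * u l ≠ 0)
    (ρ c : ℝ) (X : Fin N → ℝ) :
    X ⬝ᵥ (((diagonal (fun n => (f n)⁻¹) + ρ • vecMulVec 1 1) * Amat N f ε u) *ᵥ X) =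
      ∑ n, Bv N f ε u n / f n * X n ^ 2 +
        (∑ n, X n) * (∑ n, u n / (ε + ∑ l, f l * u l) * X n * (1 - c * (Bv N f ε u n / f n))) +
        ρ * (∑ n, X n) ^ 2 -
        (∑ n, (f n - c) * X n) * ∑ n, u n / (ε + ∑ l, f l * u l) * X n * (Bv N f ε u n / f n) := by
  rw [← mulVec_mulVec, dotProduct_diagonal_add_smul_vecMulVec_one_mulVec, sum_Amat_mulVec hD]
  simp only [Amat_mulVec_apply hD]
  set D := ε + ∑ l, f l * u l
  set s := ∑ n, X n
  set g := ∑ n, (f n - c) * X n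
  have hF : ∑ n, f n * X n = c * s + g := by
    simp only [s, g, sub_mul, sum_sub_distrib, mul_sum]
    ring
  have hpt : ∀ n, (f n)⁻¹ * X n * (Bv N f ε u n * X n +
      u n / D * (f n * s - Bv N f ε u n * ∑ k, f k * X k)) =
      Bv N f ε u n / f n * X n ^ 2 + s * (u n / D * X n * (1 - c * (Bv N f ε u n / f n))) -
        g * (u n / D * X n * (Bv N f ε u n / f n)) := fun n => by
    rw [hF]
    field_simp [hf n]
    ring
  rw [sum_congr rfl fun n _ => hpt n, sum_sub_distrib, sum_add_distrib, ← mul_sum, ← mul_sum]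
  ring

section Bounds

variable {m M : ℝ} (hε : 0 < ε) (hu : ∀ n, 0 ≤ u n) (hm : 0 < m) (hfm : ∀ n, m ≤ f n)
  (hfM : ∀ n, f n ≤ M)
include hε hu hm hfm

theorem denom_pos : 0 < ε + ∑ l, f l * u l := by
  have := sum_nonneg fun l (_ : l ∈ univ) => mul_nonneg (hm.trans_le (hfm l)).le (hu l)
  linarith

theorem sum_div_denom_le : ∑ n, u n / (ε + ∑ l, f l * u l) ≤ 1 / m := by
  rw [← sum_div, div_le_div_iff₀ (denom_pos hε hu hm hfm) hm, one_mul, mul_comm]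
  linarith [mul_sum_le_sum_mul hu hfm]

include hfM in
theorem Bv_div_mem_Icc (n : Fin N) : Bv N f ε u n / f n ∈ Set.Icc (1 / M) (1 / m) := by
  have hD := denom_pos hε hu hm hfm
  have hfn := hm.trans_le (hfm n)
  have hS := sum_nonneg fun l (_ : l ∈ univ) => hu l
  have hmT := mul_sum_le_sum_mul hu hfm
  have hTM := sum_mul_le_mul_sum hu hfM
  rw [Bv, div_div]
  constructor
  · rw [div_le_div_iff₀ (hm.trans_le ((hfm n).trans (hfM n))) (by positivity)]
    nlinarith [hfM n]
  · rw [div_le_div_iff₀ (by positivity) hm]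
    nlinarith [hfm n]

include hfM in
theorem Amat_coercive {c κ ρ : ℝ} (hcm : m ≤ c) (hcM : c ≤ M) (hρ : 0 < ρ)
    (hρκ : (M - m) ^ 2 ≤ 4 * ρ * κ * m ^ 4)
    (hκ : 2 * κ + √(∑ n, (f n - c) ^ 2) / m ^ 2 ≤ 1 / M) (X : Fin N → ℝ) :
    κ * ∑ n, X n ^ 2 ≤
      X ⬝ᵥ (((diagonal (fun n => (f n)⁻¹) + ρ • vecMulVec 1 1) * Amat N f ε u) *ᵥ X) := by
  have hD := denom_pos hε hu hm hfm
  have hβ := Bv_div_mem_Icc hε hu hm hfm hfM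
  have hw : ∀ n, 0 ≤ u n / (ε + ∑ l, f l * u l) := fun n => div_nonneg (hu n) hD.le
  have hwsum := sum_div_denom_le hε hu hm hfm
  rw [dotProduct_diagonal_add_mul_Amat_mulVec (fun n => (hm.trans_le (hfm n)).ne') hD.ne' ρ c X]
  set W := ∑ n, X n ^ 2
  have hW : 0 ≤ W := sum_nonneg fun n _ => sq_nonneg (X n)
  have hR2 : √W ^ 2 = W := Real.sq_sqrt hW
  set G := √(∑ n, (f n - c) ^ 2)
  set s := ∑ n, X n
  set H := ∑ n, u n / (ε + ∑ l, f l * u l) * X n * (1 - c * (Bv N f ε u n / f n))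
  set K := ∑ n, u n / (ε + ∑ l, f l * u l) * X n * (Bv N f ε u n / f n)
  set g := ∑ n, (f n - c) * X n
  have hmM : m ≤ M := hcm.trans hcM
  have hdiag : W / M ≤ ∑ n, Bv N f ε u n / f n * X n ^ 2 :=
    calc W / M = ∑ n, 1 / M * X n ^ 2 := by rw [← mul_sum]; ring
      _ ≤ _ := sum_le_sum fun n _ => mul_le_mul_of_nonneg_right (hβ n).1 (sq_nonneg _)
  have hH : |H| ≤ (M - m) / m * (1 / m) * √W := by
    refine (abs_sum_mul_mul_le hw (fun n => abs_one_sub_mul_le hm hcm hcM (hβ n)) X).trans ?_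
    gcongr
  have hK : |K| ≤ 1 / m * (1 / m) * √W := by
    refine (abs_sum_mul_mul_le hw (fun n => ?_) X).trans (by gcongr)
    rw [abs_of_nonneg ((one_div_nonneg.2 (hm.le.trans hmM)).trans (hβ n).1)]
    exact (hβ n).2
  have hsH : -(κ * W) ≤ s * H + ρ * s ^ 2 := by
    refine neg_le_mul_add_mul_sq hρ ?_ s
    calc H ^ 2 ≤ ((M - m) / m * (1 / m) * √W) ^ 2 := sq_le_sq' (abs_le.1 hH).1 (abs_le.1 hH).2
      _ = (M - m) ^ 2 / m ^ 4 * W := by linear_combination (M - m) ^ 2 / m ^ 4 * hR2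
      _ ≤ 4 * ρ * (κ * W) := by
        rw [← mul_assoc]
        exact mul_le_mul_of_nonneg_right ((div_le_iff₀ (by positivity)).2 hρκ) hW
  have hgK : g * K ≤ G / m ^ 2 * W :=
    calc g * K ≤ |g| * |K| := (le_abs_self _).trans (abs_mul g K).le
      _ ≤ (G * √W) * (1 / m * (1 / m) * √W) :=
        mul_le_mul (abs_sum_mul_le_sqrt_mul_sqrt _ _) hK (abs_nonneg _) (by positivity)
      _ = G / m ^ 2 * W := by linear_combination G / m ^ 2 * hR2
  have hκW := mul_le_mul_of_nonneg_right hκ hW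
  have : W / M = 1 / M * W := by ring
  linarith

end Bounds

end Amat

section Extremes

variable {N : ℕ} (f : Fin N → ℝ)

theorem fmin_le (n : Fin N) : fmin N f ≤ f n := ciInf_le (Set.finite_range f).bddBelow n

theorem le_fmax (n : Fin N) : f n ≤ fmax N f := le_ciSup (Set.finite_range f).bddAbove n

variable [NeZero N]

theorem fmin_pos (hf : ∀ n, 0 < f n) : 0 < fmin N f := by
  obtain ⟨n, hn⟩ := exists_eq_ciInf_of_finite (f := f)
  rw [fmin, ← hn]
  exact hf n

theorem fmin_le_fbar : fmin N f ≤ fbar N f := by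
  rw [fbar, le_div_iff₀ (by simp [Nat.pos_of_neZero]), mul_comm]
  simpa using card_nsmul_le_sum univ f _ fun n _ => fmin_le f n

theorem fbar_le_fmax : fbar N f ≤ fmax N f := by
  rw [fbar, div_le_iff₀ (by simp [Nat.pos_of_neZero]), mul_comm]
  simpa using sum_le_card_nsmul univ f _ fun n _ => le_fmax f n

theorem sqrt_div_fmin_sq_lt_inv_fmax (hf : ∀ n, 0 < f n) (hβ : betaf N f < 1) :
    √(∑ n, (f n - fbar N f) ^ 2) / fmin N f ^ 2 < 1 / fmax N f := by
  have hm := fmin_pos f hf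
  have hM : 0 < fmax N f := hm.trans_le ((fmin_le_fbar f).trans (fbar_le_fmax f))
  have hG : √(∑ n, (f n - fbar N f) ^ 2) < 2 * fmin N f - fmax N f := by
    rw [betaf, one_div_mul_eq_div, ← add_div, div_lt_one hm] at hβ
    linarith
  rw [div_lt_div_iff₀ (by positivity) hM]
  nlinarith [sq_nonneg (fmax N f - fmin N f)]

end Extremes

/-- Proposition 2.5: under Condition (C), there exist a symmetric positive definite matrix `Γ`
and `κ > 0` such that `⟨X, Γ A^ε(u) X⟩ ≥ κ‖X‖₂²` for all nonnegative `u` and all `X`. -/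
theorem exists_Gamma_coercive (N : ℕ) (hN : 2 ≤ N) (f : Fin N → ℝ) (hf : ∀ n, 0 < f n)
    (hC : min (kappa0 N f) 1 > betaf N f) (ε : ℝ) (hε : 0 < ε) :
    ∃ Γ : Matrix (Fin N) (Fin N) ℝ, Γ.PosDef ∧
      ∃ κ : ℝ, 0 < κ ∧ ∀ u X : Fin N → ℝ, (∀ n, 0 ≤ u n) →
        X ⬝ᵥ ((Γ * Amat N f ε u) *ᵥ X) ≥ κ * ∑ n, (X n) ^ 2 := by
  have : NeZero N := ⟨by omega⟩
  set m := fmin N f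
  set M := fmax N f
  set c := fbar N f
  have hm : 0 < m := fmin_pos f hf
  have hcm : m ≤ c := fmin_le_fbar f
  have hcM : c ≤ M := fbar_le_fmax f
  have hG : √(∑ n, (f n - c) ^ 2) / m ^ 2 < 1 / M :=
    sqrt_div_fmin_sq_lt_inv_fmax f hf (hC.trans_le (min_le_right _ _))
  set κ := (1 / M - √(∑ n, (f n - c) ^ 2) / m ^ 2) / 2
  have hκ : 0 < κ := by simp only [κ]; linarith
  have hκG : 2 * κ + √(∑ n, (f n - c) ^ 2) / m ^ 2 ≤ 1 / M := by simp only [κ]; linarith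
  set ρ := ((M - m) ^ 2 + 1) / (4 * κ * m ^ 4)
  have hρ : 0 < ρ := by positivity
  have hρκ : (M - m) ^ 2 ≤ 4 * ρ * κ * m ^ 4 := by
    have : 4 * ρ * κ * m ^ 4 = (M - m) ^ 2 + 1 := by simp only [ρ]; field_simp
    linarith
  exact ⟨diagonal (fun n => (f n)⁻¹) + ρ • vecMulVec 1 1,
    posDef_diagonal_add_smul_vecMulVec_one (fun n => inv_pos.2 (hf n)) hρ.le, κ, hκ,
    fun u X hu => Amat_coercive hε hu hm (fmin_le f) (le_fmax f) hcm hcM hρ hρκ hκG X⟩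
end

section
/- Let ε > 0 and let u ∈ ℝ^N have nonnegative entries with S := Σ_{l=1}^N f(l)u_l > 0, and set ρ := S/(ε + S). Then the matrix identity A^ε(u) = I + ρ²(A^0(u) − I) + ρ(1−ρ)D(u) holds. -/
open Finset Matrix

/-- The matrix `D(u)`: `D_{nk} = (f(n)−f(k))u_n/S` for `n ≠ k`,
`D_{nn} = −Σ_{m≠n} D_{mn}`, where `S = Σ_l f(l)u_l`. -/
noncomputable def Dmat (N : ℕ) (f : Fin N → ℝ) (u : Fin N → ℝ) :
    Matrix (Fin N) (Fin N) ℝ :=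
  Matrix.of fun n k =>
    if n = k then -∑ m ∈ Finset.univ.erase n, (f m - f n) * u m / ∑ l, f l * u l
    else (f n - f k) * u n / ∑ l, f l * u l

/-! Write `S = Σ f u`, `T = Σ u` and `ρ = S/(ε + S)`, so that `ρ²/S² = 1/(ε + S)²` and
`ρ(1 - ρ)/S = ε/(ε + S)²`. Off the diagonal, `A^ε_{nk} = u_n (ε (f_n - f_k) + f_n (S - f_k T))/(ε + S)²`
splits into `ρ(1 - ρ) D_{nk} + ρ² A⁰_{nk}`. On the diagonal, `D_{nn} = -(S - f_n T)/S` since the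
`m = n` term of its defining sum vanishes, and what remains is an identity of rational functions
of `ε`, `S` and `f_n T`. -/

section
variable {N : ℕ} (f u : Fin N → ℝ)

lemma sum_sub_mul_eq (c : ℝ) :
    ∑ l, (f l - c) * u l = ∑ l, f l * u l - c * ∑ l, u l := by
  simp only [sub_mul, Finset.sum_sub_distrib, Finset.mul_sum]

lemma Dmat_apply_self (n : Fin N) :
    Dmat N f u n n = -(∑ m, (f m - f n) * u m) / ∑ l, f l * u l := by
  simp only [Dmat, of_apply, ↓reduceIte]
  rw [← Finset.sum_div, Finset.sum_erase _ (by simp), neg_div]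

variable {f u} {ε ρ : ℝ} (hS : ∑ l, f l * u l ≠ 0) (hεS : ε + ∑ l, f l * u l ≠ 0)
  (hρ : ρ = (∑ l, f l * u l) / (ε + ∑ l, f l * u l))
include hS hεS hρ

lemma Amat_apply_self_eq (n : Fin N) :
    Amat N f ε u n n = 1 + ρ ^ 2 * (Amat N f 0 u n n - 1) + ρ * (1 - ρ) * Dmat N f u n n := by
  subst hρ
  simp only [Dmat_apply_self, Amat, Bv, of_apply, ↓reduceIte, zero_add, sum_sub_mul_eq]
  field_simp
  ring

lemma Amat_apply_of_ne_eq {n k : Fin N} (h : n ≠ k) :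
    Amat N f ε u n k = ρ ^ 2 * Amat N f 0 u n k + ρ * (1 - ρ) * Dmat N f u n k := by
  subst hρ
  simp only [Amat, Dmat, of_apply, if_neg h, zero_mul, zero_add]
  field_simp
  ring

end

theorem Amat_decomposition_general (N : ℕ) (f : Fin N → ℝ)
    (ε : ℝ) (hε : 0 < ε) (u : Fin N → ℝ)
    (S : ℝ) (hS : S = ∑ l, f l * u l) (hSpos : 0 < S)
    (ρ : ℝ) (hρ : ρ = S / (ε + S)) :
    Amat N f ε u =
      1 + ρ ^ 2 • (Amat N f 0 u - 1) + (ρ * (1 - ρ)) • Dmat N f u := by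
  subst hS
  have hεS : ε + ∑ l, f l * u l ≠ 0 := by positivity
  ext n k
  rcases eq_or_ne n k with rfl | h
  · simpa using Amat_apply_self_eq hSpos.ne' hεS hρ n
  · simpa [one_apply_ne h] using Amat_apply_of_ne_eq hSpos.ne' hεS hρ h

/-- Decomposition `A^ε(u) = I + ρ²(A⁰(u) − I) + ρ(1−ρ)D(u)` with `ρ = S/(ε+S)`. -/
theorem Amat_decomposition (N : ℕ) (hN : 2 ≤ N) (f : Fin N → ℝ) (hf : ∀ n, 0 < f n)
    (ε : ℝ) (hε : 0 < ε) (u : Fin N → ℝ) (hu : ∀ n, 0 ≤ u n)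
    (S : ℝ) (hS : S = ∑ l, f l * u l) (hSpos : 0 < S)
    (ρ : ℝ) (hρ : ρ = S / (ε + S)) :
    Amat N f ε u =
      1 + ρ ^ 2 • (Amat N f 0 u - 1) + (ρ * (1 - ρ)) • Dmat N f u :=
  Amat_decomposition_general N f ε hε u S hS hSpos ρ hρ
end

section
/- For every u ∈ ℝ^N with u_n > 0 for all n and every V ∈ ℝ^N with Σ_{n=1}^N V_n = 0, one has ⟨V, D(u)V⟩ ≥ −β(f)·‖V‖₂². -/
open Finset Matrix

/-- For `u` with positive entries and `V` with `Σ_n V_n = 0`,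
`⟨V, D(u)V⟩ ≥ −β(f)‖V‖₂²`. -/
theorem Dmat_quadratic_lower_bound (N : ℕ) (hN : 2 ≤ N) (f : Fin N → ℝ) (hf : ∀ n, 0 < f n)
    (u : Fin N → ℝ) (hu : ∀ n, 0 < u n) (V : Fin N → ℝ) (hV : ∑ n, V n = 0) :
    V ⬝ᵥ (Dmat N f u *ᵥ V) ≥ -betaf N f * ∑ n, (V n) ^ 2 := by
  haveI : NeZero N := ⟨by omega⟩
  -- abbreviations
  have hS : (0:ℝ) < ∑ l, f l * u l :=
    Finset.sum_pos (fun i _ => mul_pos (hf i) (hu i)) univ_nonempty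
  have hU : (0:ℝ) < ∑ l, u l := Finset.sum_pos (fun i _ => hu i) univ_nonempty
  set S : ℝ := ∑ l, f l * u l with hSdef
  set U : ℝ := ∑ l, u l with hUdef
  set A : ℝ := ∑ n, u n * V n with hAdef
  set B : ℝ := ∑ n, f n * V n with hBdef
  set T : ℝ := ∑ n, V n ^ 2 with hTdef
  set F2 : ℝ := ∑ n, f n * V n ^ 2 with hF2def
  set Q2 : ℝ := ∑ n, (f n - fbar N f) ^ 2 with hQ2def
  -- facts about fmin / fmax
  have hbddA : BddAbove (Set.range f) := Set.Finite.bddAbove (Set.finite_range f)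
  have hbddB : BddBelow (Set.range f) := Set.Finite.bddBelow (Set.finite_range f)
  have hle_max : ∀ n, f n ≤ fmax N f := fun n => le_ciSup hbddA n
  have hmin_le : ∀ n, fmin N f ≤ f n := fun n => ciInf_le hbddB n
  have hminpos : 0 < fmin N f := by
    obtain ⟨n0, hn0⟩ := Finite.exists_min f
    have : f n0 ≤ fmin N f := le_ciInf hn0
    exact lt_of_lt_of_le (hf n0) this
  have hmaxpos : 0 < fmax N f := lt_of_lt_of_le hminpos (le_trans (hmin_le 0) (hle_max 0))
  have hminmax : fmin N f ≤ fmax N f := le_trans (hmin_le 0) (hle_max 0)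
  have hT0 : 0 ≤ T := Finset.sum_nonneg fun n _ => sq_nonneg _
  -- diagonal entries
  have hDnn : ∀ n, Dmat N f u n n = (f n * U - S) / S := by
    intro n
    have h1 : ∑ m ∈ Finset.univ.erase n, (f m - f n) * u m / S
        = (S - f n * U) / S := by
      rw [Finset.sum_erase_eq_sub (mem_univ n)]
      simp only [sub_self, zero_mul, zero_div, sub_zero]
      rw [← Finset.sum_div]
      congr 1
      rw [hSdef, hUdef, Finset.mul_sum, ← Finset.sum_sub_distrib]
      exact Finset.sum_congr rfl fun m _ => by ring
    have hD : Dmat N f u n n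
        = -∑ m ∈ Finset.univ.erase n, (f m - f n) * u m / S := by
      simp [Dmat, ← hSdef]
    rw [hD, h1]
    ring
  -- rows of D *ᵥ V
  have hinner : ∀ n, (Dmat N f u *ᵥ V) n = -(u n * B) / S + (f n * U - S) / S * V n := by
    intro n
    have hrow : (Dmat N f u *ᵥ V) n = ∑ k, Dmat N f u n k * V k := rfl
    rw [hrow, ← Finset.sum_erase_add _ _ (mem_univ n), hDnn n]
    have h2 : ∑ k ∈ Finset.univ.erase n, Dmat N f u n k * V k
        = ∑ k, (f n - f k) * u n / S * V k := by
      have he : ∀ k ∈ Finset.univ.erase n, Dmat N f u n k * V k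
          = (f n - f k) * u n / S * V k := by
        intro k hk
        have hne : n ≠ k := (Finset.ne_of_mem_erase hk).symm
        simp only [Dmat, Matrix.of_apply, if_neg hne, ← hSdef]
      rw [Finset.sum_congr rfl he, Finset.sum_erase_eq_sub (mem_univ n)]
      simp
    rw [h2]
    have h3 : ∑ k, (f n - f k) * u n / S * V k = -(u n * B) / S := by
      have : ∀ k, (f n - f k) * u n / S * V k
          = (u n / S) * (f n * V k) - (u n / S) * (f k * V k) := fun k => by ring
      simp only [this, Finset.sum_sub_distrib, ← Finset.mul_sum, ← hBdef]
      rw [hV]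
      ring
    rw [h3]
  -- the quadratic form
  have hQ : V ⬝ᵥ (Dmat N f u *ᵥ V) = -(A * B / S) + (F2 * U / S - T) := by
    have hdot : V ⬝ᵥ (Dmat N f u *ᵥ V) = ∑ n, V n * (Dmat N f u *ᵥ V) n := rfl
    rw [hdot]
    have : ∀ n, V n * (Dmat N f u *ᵥ V) n
        = (u n * V n) * (-(B / S)) + ((f n * V n ^ 2) * (U / S) - V n ^ 2 * (S / S)) := by
      intro n
      rw [hinner n]
      ring
    rw [Finset.sum_congr rfl fun n _ => this n, Finset.sum_add_distrib,
      Finset.sum_sub_distrib, ← Finset.sum_mul, ← Finset.sum_mul, ← Finset.sum_mul,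
      ← hAdef, ← hF2def, ← hTdef, div_self (ne_of_gt hS)]
    ring
  rw [ge_iff_le, hQ]
  -- bound 1 : F2 * U / S ≥ fmin * T / fmax
  have h1 : fmin N f * T / fmax N f ≤ F2 * U / S := by
    rw [div_le_div_iff₀ hmaxpos hS]
    have hF2ge : fmin N f * T ≤ F2 := by
      rw [hF2def, hTdef, Finset.mul_sum]
      exact Finset.sum_le_sum fun n _ =>
        mul_le_mul_of_nonneg_right (hmin_le n) (sq_nonneg _)
    have hSle : S ≤ fmax N f * U := by
      rw [hSdef, hUdef, Finset.mul_sum]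
      exact Finset.sum_le_sum fun n _ =>
        mul_le_mul_of_nonneg_right (hle_max n) (le_of_lt (hu n))
    have hF2nn : 0 ≤ F2 := le_trans (mul_nonneg (le_of_lt hminpos) hT0) hF2ge
    nlinarith [mul_le_mul_of_nonneg_right hSle (mul_nonneg (le_of_lt hminpos) hT0),
      mul_le_mul_of_nonneg_right hF2ge (mul_nonneg (le_of_lt hmaxpos) (le_of_lt hU)),
      mul_le_mul_of_nonneg_left hSle hF2nn]
  -- bound 2 : fmin*T/fmax - T ≥ -((fmax-fmin)/fmin)*T
  have h2 : -((fmax N f - fmin N f) / fmin N f * T) ≤ fmin N f * T / fmax N f - T := by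
    have e : fmin N f * T / fmax N f - T = -((fmax N f - fmin N f) / fmax N f * T) := by
      field_simp
      ring
    rw [e]
    have hdd : (fmax N f - fmin N f) / fmax N f ≤ (fmax N f - fmin N f) / fmin N f :=
      div_le_div_of_nonneg_left (sub_nonneg.2 hminmax) hminpos hminmax
    exact neg_le_neg (mul_le_mul_of_nonneg_right hdd hT0)
  -- bound 3 : A * B / S ≤ (1/fmin) * sqrt Q2 * T
  have h3 : A * B / S ≤ 1 / fmin N f * Real.sqrt Q2 * T := by
    have hsT : ∀ n, |V n| ≤ Real.sqrt T := by
      intro n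
      rw [← Real.sqrt_sq_eq_abs]
      exact Real.sqrt_le_sqrt (Finset.single_le_sum (fun i _ => sq_nonneg (V i)) (mem_univ n))
    have hsTnn : (0:ℝ) ≤ Real.sqrt T := Real.sqrt_nonneg _
    have hAabs : |A| ≤ U * Real.sqrt T := by
      calc |A| ≤ ∑ n, |u n * V n| := Finset.abs_sum_le_sum_abs _ _
        _ ≤ ∑ n, u n * Real.sqrt T := by
            refine Finset.sum_le_sum fun n _ => ?_
            rw [abs_mul, abs_of_pos (hu n)]
            exact mul_le_mul_of_nonneg_left (hsT n) (le_of_lt (hu n))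
        _ = U * Real.sqrt T := by rw [← Finset.sum_mul]
    have hBeq : B = ∑ n, (f n - fbar N f) * V n := by
      have : ∑ n, (f n - fbar N f) * V n = ∑ n, f n * V n - fbar N f * ∑ n, V n := by
        rw [Finset.mul_sum, ← Finset.sum_sub_distrib]
        exact Finset.sum_congr rfl fun n _ => by ring
      rw [this, hV, mul_zero, sub_zero, hBdef]
    have hBabs : |B| ≤ Real.sqrt Q2 * Real.sqrt T := by
      rw [abs_le]
      constructor
      · have := Real.sum_mul_le_sqrt_mul_sqrt Finset.univ
          (fun n => f n - fbar N f) (fun n => -V n)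
        simp only [mul_neg, Finset.sum_neg_distrib, neg_sq] at this
        rw [← hBeq, ← hQ2def, ← hTdef] at this
        linarith
      · have := Real.sum_mul_le_sqrt_mul_sqrt Finset.univ
          (fun n => f n - fbar N f) V
        rw [← hBeq, ← hQ2def, ← hTdef] at this
        exact this
    have hABle : A * B ≤ U * Real.sqrt T * (Real.sqrt Q2 * Real.sqrt T) := by
      calc A * B ≤ |A * B| := le_abs_self _
        _ = |A| * |B| := abs_mul _ _
        _ ≤ U * Real.sqrt T * (Real.sqrt Q2 * Real.sqrt T) :=
            mul_le_mul hAabs hBabs (abs_nonneg B) (mul_nonneg (le_of_lt hU) hsTnn)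
    have hfU : fmin N f * U ≤ S := by
      rw [hSdef, hUdef, Finset.mul_sum]
      exact Finset.sum_le_sum fun n _ =>
        mul_le_mul_of_nonneg_right (hmin_le n) (le_of_lt (hu n))
    have hnum : (0:ℝ) ≤ U * Real.sqrt T * (Real.sqrt Q2 * Real.sqrt T) :=
      mul_nonneg (mul_nonneg (le_of_lt hU) hsTnn)
        (mul_nonneg (Real.sqrt_nonneg _) hsTnn)
    calc A * B / S ≤ U * Real.sqrt T * (Real.sqrt Q2 * Real.sqrt T) / S := by
          gcongr
      _ ≤ U * Real.sqrt T * (Real.sqrt Q2 * Real.sqrt T) / (fmin N f * U) :=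
          div_le_div_of_nonneg_left hnum (mul_pos hminpos hU) hfU
      _ = 1 / fmin N f * Real.sqrt Q2 * T := by
          have hTT : Real.sqrt T * Real.sqrt T = T := Real.mul_self_sqrt hT0
          have e2 : U * Real.sqrt T * (Real.sqrt Q2 * Real.sqrt T)
              = Real.sqrt Q2 * T * U := by
            calc U * Real.sqrt T * (Real.sqrt Q2 * Real.sqrt T)
                = Real.sqrt Q2 * (Real.sqrt T * Real.sqrt T) * U := by ring
              _ = Real.sqrt Q2 * T * U := by rw [hTT]
          rw [e2, mul_comm (fmin N f) U, ← div_div,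
            mul_div_cancel_right₀ _ (ne_of_gt hU)]
          ring
  -- combine
  rw [betaf, ← hQ2def]
  nlinarith [h1, h2, h3]
end

section
/- Let N ≥ 1, let Γ be a real symmetric positive definite N×N matrix, let λ > 0 be such that ⟨X, ΓX⟩ ≤ λ‖X‖₂² for all X ∈ ℝ^N, let A be an arbitrary real N×N matrix and κ > 0 be such that ⟨X, ΓAX⟩ ≥ κ‖X‖₂² for all X ∈ ℝ^N. Then, denoting by Γ^{1/2} the unique symmetric positive definite square root of Γ, one has ⟨Z, Γ^{1/2} A Γ^{−1/2} Z⟩ ≥ (κ/λ)‖Z‖₂² for all Z ∈ ℝ^N. -/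
open Matrix

/-- If `Γ` is symmetric positive definite with `⟨X,ΓX⟩ ≤ λ‖X‖₂²`, and `A` satisfies
`⟨X, ΓAX⟩ ≥ κ‖X‖₂²`, then for the (unique) symmetric positive definite square root `S`
of `Γ` one has `⟨Z, S A S⁻¹ Z⟩ ≥ (κ/λ)‖Z‖₂²`. -/
theorem sqrt_conjugation_coercive (N : ℕ) (hN : 1 ≤ N)
    (Γ : Matrix (Fin N) (Fin N) ℝ) (hΓ : Γ.PosDef)
    (lam : ℝ) (hlam : 0 < lam)
    (hup : ∀ X : Fin N → ℝ, X ⬝ᵥ (Γ *ᵥ X) ≤ lam * ∑ n, (X n) ^ 2)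
    (A : Matrix (Fin N) (Fin N) ℝ) (κ : ℝ) (hκ : 0 < κ)
    (hlow : ∀ X : Fin N → ℝ, X ⬝ᵥ ((Γ * A) *ᵥ X) ≥ κ * ∑ n, (X n) ^ 2)
    (S : Matrix (Fin N) (Fin N) ℝ) (hS : S.PosDef) (hSsq : S * S = Γ) :
    ∀ Z : Fin N → ℝ, Z ⬝ᵥ ((S * A * S⁻¹) *ᵥ Z) ≥ (κ / lam) * ∑ n, (Z n) ^ 2 := by
  intro Z
  have hdet : IsUnit S.det := hS.det_pos.ne'.isUnit
  have hSt : Sᵀ = S := by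
    have := hS.1
    rwa [Matrix.IsHermitian, Matrix.conjTranspose_eq_transpose_of_trivial] at this
  obtain ⟨X, hZ⟩ : ∃ X : Fin N → ℝ, S *ᵥ X = Z :=
    ⟨S⁻¹ *ᵥ Z, by
      rw [Matrix.mulVec_mulVec, Matrix.mul_nonsing_inv _ hdet, Matrix.one_mulVec]⟩
  have e1 : S *ᵥ X = X ᵥ* S := by
    conv_rhs => rw [← hSt]
    rw [Matrix.vecMul_transpose]
  have hmat : S * (S * A * S⁻¹ * S) = Γ * A := by
    rw [Matrix.mul_assoc (S * A), Matrix.nonsing_inv_mul _ hdet, Matrix.mul_one,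
      ← Matrix.mul_assoc, hSsq]
  have key : Z ⬝ᵥ ((S * A * S⁻¹) *ᵥ Z) = X ⬝ᵥ ((Γ * A) *ᵥ X) := by
    rw [← hZ, Matrix.mulVec_mulVec]
    nth_rewrite 1 [e1]
    rw [← Matrix.dotProduct_mulVec, Matrix.mulVec_mulVec, hmat]
  have h0 : ∀ v : Fin N → ℝ, (∑ n, (v n) ^ 2) = v ⬝ᵥ v := by
    intro v; simp [dotProduct, pow_two]
  have hZZ : (∑ n, (Z n) ^ 2) = X ⬝ᵥ (Γ *ᵥ X) := by
    rw [h0, ← hZ]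
    nth_rewrite 1 [e1]
    rw [← Matrix.dotProduct_mulVec, Matrix.mulVec_mulVec, hSsq]
  have h1 : X ⬝ᵥ ((Γ * A) *ᵥ X) ≥ κ * ∑ n, (X n) ^ 2 := hlow X
  have h2 : (∑ n, (Z n) ^ 2) ≤ lam * ∑ n, (X n) ^ 2 := hZZ ▸ hup X
  rw [key]
  calc (κ / lam) * ∑ n, (Z n) ^ 2 ≤ (κ / lam) * (lam * ∑ n, (X n) ^ 2) := by
        apply mul_le_mul_of_nonneg_left h2 (by positivity)
    _ = κ * ∑ n, (X n) ^ 2 := by field_simp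
    _ ≤ X ⬝ᵥ ((Γ * A) *ᵥ X) := h1
end
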